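/- arXiv:1405.5548 — 4 statements merged into one kernel-verified Lean document; each statement's English description precedes it below -/
import Mathlib

section
/- Let f be twice continuously differentiable on (a, b). Suppose a < x_{k-1} < x_k < x*_k < b with h > 0, x_k + h ≤ x*_k, f(x_k) ≤ f(x_{k-1}), f(x_k + h) > f(x_k), f(x*_k) < f(x_k), and f(x*_k) - f(x_k) = f'(x*_k)·(x*_k - x_k) with f''(x*_k) ≥ 0. Then there exist at least two distinct points in (x_{k-1}, x*_k] where f'' vanishes. -/
/-!
By the mean value theorem, `f' ≤ 0` somewhere on `(x_{k-1}, x_k)` (descent) and `f' > 0` somewhere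
on `(x_k, x_k + h)` (ascent), so `f'' > 0` at some point in between. The secant condition at the
leap point says `f'(x*_k)` equals the secant slope `(f(x*_k) - f(x_k)) / (x*_k - x_k) < 0`, so a
second application of the mean value theorem to `f'` gives `f'' < 0` at a point `d` beyond the
first one. As `f''(x*_k) ≥ 0`, the intermediate value theorem yields a zero of `f''` on each side
of `d`.
-/

open Set

section MeanValue

variable {f : ℝ → ℝ} {x y : ℝ}

theorem exists_mem_Ioo_deriv_pos (hxy : x < y) (hf : DifferentiableOn ℝ f (Icc x y))
    (h : f x < f y) : ∃ c ∈ Ioo x y, 0 < deriv f c := by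
  obtain ⟨c, hc, hslope⟩ :=
    exists_deriv_eq_slope f hxy hf.continuousOn (hf.mono Ioo_subset_Icc_self)
  exact ⟨c, hc, hslope ▸ div_pos (sub_pos.2 h) (sub_pos.2 hxy)⟩

theorem exists_mem_Ioo_deriv_neg (hxy : x < y) (hf : DifferentiableOn ℝ f (Icc x y))
    (h : f y < f x) : ∃ c ∈ Ioo x y, deriv f c < 0 := by
  obtain ⟨c, hc, hslope⟩ :=
    exists_deriv_eq_slope f hxy hf.continuousOn (hf.mono Ioo_subset_Icc_self)
  exact ⟨c, hc, hslope ▸ div_neg_of_neg_of_pos (sub_neg.2 h) (sub_pos.2 hxy)⟩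

theorem exists_mem_Ioo_deriv_nonpos (hxy : x < y) (hf : DifferentiableOn ℝ f (Icc x y))
    (h : f y ≤ f x) : ∃ c ∈ Ioo x y, deriv f c ≤ 0 := by
  obtain ⟨c, hc, hslope⟩ :=
    exists_deriv_eq_slope f hxy hf.continuousOn (hf.mono Ioo_subset_Icc_self)
  exact ⟨c, hc, hslope ▸ div_nonpos_of_nonpos_of_nonneg (sub_nonpos.2 h) (sub_pos.2 hxy).le⟩

end MeanValue

theorem two_inflection_points (f : ℝ → ℝ) (a b xkm1 xk xs h : ℝ)
    (hf : ContDiffOn ℝ 2 f (Set.Ioo a b))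
    (ha : a < xkm1) (h1 : xkm1 < xk) (h2 : xk < xs) (h3 : xs < b)
    (hh : 0 < h) (hhs : xk + h ≤ xs)
    (hdesc : f xk ≤ f xkm1) (hasc : f (xk + h) > f xk)
    (hleap : f xs < f xk)
    (hsec : f xs - f xk = deriv f xs * (xs - xk))
    (hconv : 0 ≤ deriv (deriv f) xs) :
    ∃ y ∈ Set.Ioc xkm1 xs, ∃ z ∈ Set.Ioc xkm1 xs,
      y ≠ z ∧ deriv (deriv f) y = 0 ∧ deriv (deriv f) z = 0 := by
  have hf' : ContDiffOn ℝ 1 (deriv f) (Ioo a b) := hf.deriv_of_isOpen isOpen_Ioo le_rfl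
  have hdf : DifferentiableOn ℝ f (Ioo a b) := hf.differentiableOn two_ne_zero
  have hdf' : DifferentiableOn ℝ (deriv f) (Ioo a b) := hf'.differentiableOn one_ne_zero
  have hcf'' : ContinuousOn (deriv (deriv f)) (Ioo a b) :=
    hf'.continuousOn_deriv_of_isOpen isOpen_Ioo le_rfl
  have hleap_slope : deriv f xs < 0 :=
    neg_of_mul_neg_left (hsec ▸ sub_neg.2 hleap) (sub_pos.2 h2).le
  obtain ⟨c₁, hc₁, hfc₁⟩ :=
    exists_mem_Ioo_deriv_nonpos h1 (hdf.mono (Icc_subset_Ioo ha (by linarith))) hdesc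
  obtain ⟨c₂, hc₂, hfc₂⟩ := exists_mem_Ioo_deriv_pos (lt_add_of_pos_right xk hh)
    (hdf.mono (Icc_subset_Ioo (by linarith) (by linarith))) hasc
  obtain ⟨c, hc, hf''c⟩ := exists_mem_Ioo_deriv_pos (hc₁.2.trans hc₂.1)
    (hdf'.mono (Icc_subset_Ioo (by linarith [hc₁.1]) (by linarith [hc₂.2]))) (hfc₁.trans_lt hfc₂)
  obtain ⟨d, hd, hf''d⟩ := exists_mem_Ioo_deriv_neg (hc₂.2.trans_le hhs)
    (hdf'.mono (Icc_subset_Ioo (by linarith [hc₂.1]) h3)) (hleap_slope.trans hfc₂)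
  obtain ⟨y, hy, hy0⟩ := intermediate_value_Ioo' (hc.2.trans hd.1).le
    (hcf''.mono (Icc_subset_Ioo (by linarith [hc₁.1, hc.1]) (by linarith [hd.2])))
    ⟨hf''d, hf''c⟩
  obtain ⟨z, hz, hz0⟩ := intermediate_value_Ioc hd.2.le
    (hcf''.mono (Icc_subset_Ioo (by linarith [hc₂.1, hd.1]) h3)) ⟨hf''d, hconv⟩
  exact ⟨y, ⟨by linarith [hc₁.1, hc.1, hy.1], by linarith [hy.2, hd.2]⟩,
    z, ⟨by linarith [hc₂.1, hd.1, hz.1], hz.2⟩, (hy.2.trans hz.1).ne, hy0, hz0⟩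
end

section
/- Let f be n-times continuously differentiable on [a, b] with f^(n)(x) ≥ 0 for all x ∈ [a, b], and fix x_k ∈ [a, b). Define g_0 = f and g_m(x) = (g_{m-1}(x) - g_{m-1}(x_k))/(x - x_k) for x ≠ x_k, extended continuously at x_k. Then g_{n-1}(x) ≥ g_{n-1}(x_k) for all x ∈ [x_k, b], i.e. g_{n-1} attains its minimum on [x_k, b] at x_k. -/
/-!
Iterating the divided difference peels off one Taylor coefficient at a time, so for `x ≠ x_k`
`g_m(x) - g_m(x_k) = (f(x) - P_m(x)) / (x - x_k)^m`, where `P_m` is the Taylor polynomial of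
degree `m` of `f` at `x_k`. For `m = n - 1` the numerator is the integral remainder
`∫ (x - t)^(n-1)/(n-1)! f^(n)(t) dt`, which is nonnegative for `x > x_k` because `f^(n) ≥ 0`.
-/

noncomputable def divDiff (f : ℝ → ℝ) (xk a b : ℝ) : ℕ → ℝ → ℝ
  | 0 => f
  | m + 1 => fun x =>
      if x = xk then iteratedDerivWithin (m + 1) f (Set.Icc a b) xk / Nat.factorial (m + 1)
      else (divDiff f xk a b m x - divDiff f xk a b m xk) / (x - xk)

open Set

theorem iteratedDerivWithin_subset {𝕜 F : Type*} [NontriviallyNormedField 𝕜]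
    [NormedAddCommGroup F] [NormedSpace 𝕜 F] {f : 𝕜 → F} {s t : Set 𝕜} {n : ℕ} {x : 𝕜}
    (st : s ⊆ t) (hs : UniqueDiffOn 𝕜 s) (ht : UniqueDiffOn 𝕜 t) (h : ContDiffOn 𝕜 n f t)
    (hx : x ∈ s) : iteratedDerivWithin n f s x = iteratedDerivWithin n f t x := by
  simp only [iteratedDerivWithin_eq_iteratedFDerivWithin, iteratedFDerivWithin_subset st hs ht h hx]

theorem taylorWithinEval_subset {f : ℝ → ℝ} {s t : Set ℝ} {n : ℕ} {x₀ : ℝ} (x : ℝ)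
    (st : s ⊆ t) (hs : UniqueDiffOn ℝ s) (ht : UniqueDiffOn ℝ t) (h : ContDiffOn ℝ n f t)
    (hx₀ : x₀ ∈ s) : taylorWithinEval f n s x₀ x = taylorWithinEval f n t x₀ x := by
  simp only [taylor_within_apply]
  refine Finset.sum_congr rfl fun k hk => ?_
  have hkn : (k : WithTop ℕ∞) ≤ n := by exact_mod_cast Finset.mem_range_succ_iff.1 hk
  rw [iteratedDerivWithin_subset st hs ht (h.of_le hkn) hx₀]

theorem taylorWithinEval_le_of_iteratedDerivWithin_nonneg {f : ℝ → ℝ} {s : Set ℝ} {n : ℕ}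
    {x₀ x : ℝ} (hx : x₀ < x) (hs : UniqueDiffOn ℝ s) (hsub : Icc x₀ x ⊆ s)
    (hf : ContDiffOn ℝ (n + 1 : ℕ) f s)
    (hpos : ∀ y ∈ Icc x₀ x, 0 ≤ iteratedDerivWithin (n + 1) f s y) :
    taylorWithinEval f n s x₀ x ≤ f x := by
  have hI : UniqueDiffOn ℝ (Icc x₀ x) := uniqueDiffOn_Icc hx
  have hremainder := taylor_integral_remainder (hf.mono ((uIcc_of_le hx.le).subset.trans hsub))
  rw [uIcc_of_le hx.le, taylorWithinEval_subset x hsub hI hs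
    (hf.of_le (by exact_mod_cast n.le_succ)) (left_mem_Icc.2 hx.le)] at hremainder
  rw [← sub_nonneg, hremainder]
  refine intervalIntegral.integral_nonneg hx.le fun y hy => ?_
  rw [iteratedDerivWithin_subset hsub hI hs hf hy]
  exact smul_nonneg (div_nonneg (pow_nonneg (sub_nonneg.2 hy.2) _) (Nat.cast_nonneg _))
    (hpos y hy)

theorem divDiff_sub_divDiff_self (f : ℝ → ℝ) (xk a b : ℝ) (m : ℕ) {x : ℝ} (hx : x ≠ xk) :
    divDiff f xk a b m x - divDiff f xk a b m xk =
      (f x - taylorWithinEval f m (Icc a b) xk x) / (x - xk) ^ m := by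
  induction m with
  | zero => simp [divDiff]
  | succ m ih =>
    have hne : x - xk ≠ 0 := sub_ne_zero.2 hx
    simp only [divDiff, if_neg hx]
    rw [ih, taylorWithinEval_succ, smul_eq_mul, Nat.factorial_succ]
    push_cast
    field_simp
    ring

theorem recursive_lga_terminates (f : ℝ → ℝ) (a b xk : ℝ) (n : ℕ) (hn : 1 ≤ n)
    (hf : ContDiffOn ℝ n f (Set.Icc a b))
    (hpos : ∀ x ∈ Set.Icc a b, 0 ≤ iteratedDerivWithin n f (Set.Icc a b) x)
    (hxk : xk ∈ Set.Ico a b) :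
    ∀ x ∈ Set.Icc xk b, divDiff f xk a b (n - 1) xk ≤ divDiff f xk a b (n - 1) x := by
  intro x hx
  rcases hx.1.eq_or_lt with rfl | hlt
  · exact le_rfl
  obtain ⟨m, rfl⟩ : ∃ m, n = m + 1 := ⟨n - 1, by omega⟩
  have hsub : Icc xk x ⊆ Icc a b := Icc_subset_Icc hxk.1 hx.2
  have hab : a < b := hxk.1.trans_lt hxk.2
  rw [Nat.add_sub_cancel, ← sub_nonneg, divDiff_sub_divDiff_self f xk a b m hlt.ne']
  refine div_nonneg (sub_nonneg.2 ?_) (pow_nonneg (sub_nonneg.2 hlt.le) _)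
  exact taylorWithinEval_le_of_iteratedDerivWithin_nonneg hlt (uniqueDiffOn_Icc hab) hsub hf
    fun y hy => hpos y (hsub hy)
end

section
/- Let D_h be the central difference operator with step h ≠ 0, and let f be a smooth function. Then for every j, (D_h)^j applied to the function x ↦ f^{(j+2)}(t·x) (as a function of x, with t a parameter) equals the function x ↦ (d/dt)^{j+2} applied to t ↦ t^j · ((D_{t·h})^j f)(t·x). -/
noncomputable def cdiff (h : ℝ) (f : ℝ → ℝ) : ℝ → ℝ :=
  fun x => (f (x + h) - f (x - h)) / (2 * h)

/-- linearity of iteratedDeriv on (F - G)/c -/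
lemma iteratedDeriv_sub_div (n : ℕ) (F G : ℝ → ℝ) (hF : ContDiff ℝ (⊤ : ℕ∞) F)
    (hG : ContDiff ℝ (⊤ : ℕ∞) G) (c : ℝ) (t : ℝ) :
    iteratedDeriv n (fun s => (F s - G s) / c) t =
      (iteratedDeriv n F t - iteratedDeriv n G t) / c := by
  have hF' : ContDiffOn ℝ n F Set.univ := (hF.of_le (by exact_mod_cast le_top)).contDiffOn
  have hG' : ContDiffOn ℝ n G Set.univ := (hG.of_le (by exact_mod_cast le_top)).contDiffOn
  simp_rw [div_eq_inv_mul, ← iteratedDerivWithin_univ]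
  rw [iteratedDerivWithin_const_mul (Set.mem_univ t) uniqueDiffOn_univ _ ((hF'.sub hG') t (Set.mem_univ t)),
    show (fun s => F s - G s) = F - G from rfl,
    iteratedDerivWithin_sub (Set.mem_univ t) uniqueDiffOn_univ (hF' t (Set.mem_univ t)) (hG' t (Set.mem_univ t))]

/-- pull a constant multiple through iterated cdiff -/
lemma cdiff_iter_const_mul (H : ℝ) (j : ℕ) (c : ℝ) (g : ℝ → ℝ) :
    (cdiff H)^[j] (fun y => c * g y) = fun y => c * (cdiff H)^[j] g y := by
  induction j generalizing g with
  | zero => rfl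
  | succ j ih =>
    rw [Function.iterate_succ_apply, Function.iterate_succ_apply]
    rw [show cdiff H (fun y => c * g y) = fun y => c * cdiff H g y by
      funext y; simp only [cdiff]; ring]
    exact ih _

/-- one-step scaling identity -/
lemma cdiff_scale (h : ℝ) (f : ℝ → ℝ) (s : ℝ) :
    cdiff h (fun y => f (s * y)) = fun y => s * cdiff (s * h) f (s * y) := by
  funext y
  simp only [cdiff]
  rcases eq_or_ne s 0 with rfl | hs
  · simp
  · rcases eq_or_ne h 0 with rfl | h0
    · simp
    · rw [mul_add, mul_sub]
      field_simp

/-- iterated scaling identity (purely algebraic, all s) -/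
lemma cdiff_iter_scale (h : ℝ) (j : ℕ) (f : ℝ → ℝ) (s : ℝ) :
    (cdiff h)^[j] (fun y => f (s * y)) =
      fun y => s ^ j * (cdiff (s * h))^[j] f (s * y) := by
  induction j generalizing f with
  | zero => simp
  | succ j ih =>
    rw [Function.iterate_succ_apply, cdiff_scale, Function.iterate_succ_apply,
      show (fun y => s * cdiff (s * h) f (s * y)) =
        (fun y => s * ((fun z => cdiff (s * h) f z) (s * y))) from rfl]
    have := ih (fun z => s * cdiff (s * h) f z)
    rw [show (fun y => s * (fun z => cdiff (s*h) f z) (s * y)) =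
        (fun y => (fun z => s * cdiff (s*h) f z) (s * y)) from rfl, this,
      cdiff_iter_const_mul]
    funext y
    ring

/-- commuting iterated cdiff (in the second variable) past iteratedDeriv (in the first) -/
lemma cdiff_iter_iteratedDeriv (h : ℝ) (j n : ℕ) (t : ℝ) :
    ∀ F : ℝ → ℝ → ℝ, (∀ x, ContDiff ℝ (⊤ : ℕ∞) (fun s => F s x)) →
    ∀ x, (cdiff h)^[j] (fun y => iteratedDeriv n (fun s => F s y) t) x =
      iteratedDeriv n (fun s => (cdiff h)^[j] (F s) x) t := by
  induction j with
  | zero => intro F _ x; rfl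
  | succ j ih =>
    intro F hF x
    rw [Function.iterate_succ_apply]
    have key : cdiff h (fun y => iteratedDeriv n (fun s => F s y) t) =
        fun y => iteratedDeriv n (fun s => cdiff h (F s) y) t := by
      funext y
      simp only [cdiff]
      rw [iteratedDeriv_sub_div n _ _ (hF (y + h)) (hF (y - h))]
    rw [key]
    have hF' : ∀ x, ContDiff ℝ (⊤ : ℕ∞) (fun s => cdiff h (F s) x) := fun x =>
      (((hF (x + h)).sub (hF (x - h))).div_const _)
    have := ih (fun s => cdiff h (F s)) hF' x
    rw [this]
    simp only [Function.iterate_succ_apply]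

theorem cdiff_iter_commutes (f : ℝ → ℝ) (hf : ContDiff ℝ (⊤ : ℕ∞) f)
    (h : ℝ) (hh : h ≠ 0) (j : ℕ) (t : ℝ) :
    (cdiff h)^[j] (fun x => iteratedDeriv (j + 2) (fun s => f (s * x)) t) =
      fun x =>
        iteratedDeriv (j + 2) (fun s => s ^ j * (cdiff (s * h))^[j] f (s * x)) t := by
  funext x
  have hF : ∀ y, ContDiff ℝ (⊤ : ℕ∞) (fun s : ℝ => f (s * y)) := fun y =>
    hf.comp (contDiff_id.mul contDiff_const)
  rw [cdiff_iter_iteratedDeriv h j (j + 2) t (fun s y => f (s * y)) hF x]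
  congr 1
  funext s
  rw [cdiff_iter_scale h j f s]
end

section
/- Let f be a smooth real function and h ≠ 0. Then for every natural number j, ((D_h)^j f)(0) = f^{(j)}(0) + ∫₀¹ (d/dt)^{j+2} [t^j · ((D_{th})^j f)(0)] · (1-t)^{j+1}/(j+1)! dt, where (D_{th})^j f denotes the j-fold central difference of f with step t·h. -/
open Finset Function

lemma fwdDiff_pow_step (m : ℕ) :
    fwdDiff (1:ℝ) (fun x : ℝ => x ^ m)
      = fun x : ℝ => ∑ k ∈ range m, (m.choose k : ℝ) * x ^ k := by
  funext x
  have h := add_pow x (1:ℝ) m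
  simp only [one_pow, mul_one] at h
  rw [fwdDiff, h, sum_range_succ]
  simp [mul_comm]

lemma fwdDiff_iter_sum_pow (c : ℕ → ℝ) (m n : ℕ) (x : ℝ) :
    (fwdDiff (1:ℝ))^[n] (fun x : ℝ => ∑ k ∈ range m, c k * x ^ k) x
      = ∑ k ∈ range m, c k * ((fwdDiff (1:ℝ))^[n] (fun x : ℝ => x ^ k) x) := by
  have h : (fun x : ℝ => ∑ k ∈ range m, c k * x ^ k)
      = ∑ k ∈ range m, c k • (fun x : ℝ => x ^ k) := by
    funext y; rw [Finset.sum_apply]; simp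
  rw [h, fwdDiff_iter_finset_sum, Finset.sum_apply]
  simp

lemma fwdDiff_pow_lt : ∀ m j : ℕ, m < j → (fwdDiff (1:ℝ))^[j] (fun x : ℝ => x ^ m) = fun _ => 0 := by
  intro m
  induction m using Nat.strong_induction_on with
  | _ m ih =>
    intro j hj
    rcases j with _ | j'
    · omega
    rw [Function.iterate_succ_apply, fwdDiff_pow_step]
    funext x
    rw [fwdDiff_iter_sum_pow]
    apply Finset.sum_eq_zero
    intro k hk
    rw [ih k (mem_range.mp hk) j' (lt_of_lt_of_le (mem_range.mp hk) (Nat.lt_succ_iff.mp hj))]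
    simp

lemma fwdDiff_pow_self : ∀ j : ℕ, (fwdDiff (1:ℝ))^[j] (fun x : ℝ => x ^ j)
    = fun _ => (j.factorial : ℝ) := by
  intro j
  induction j with
  | zero => funext x; simp
  | succ n ih =>
    rw [Function.iterate_succ_apply, fwdDiff_pow_step]
    funext x
    rw [fwdDiff_iter_sum_pow, sum_range_succ]
    have h0 : ∀ k ∈ range n, ((n+1).choose k : ℝ) * ((fwdDiff (1:ℝ))^[n] (fun x : ℝ => x ^ k)) x = 0 := by
      intro k hk
      rw [fwdDiff_pow_lt k n (mem_range.mp hk)]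
      simp
    rw [Finset.sum_eq_zero h0, ih]
    simp [Nat.factorial_succ]

lemma S_eq (j m : ℕ) :
    ∑ k ∈ range (j+1), (-1:ℝ)^(j-k) * (j.choose k) * ((2*k : ℝ) - j)^m
      = (fwdDiff (1:ℝ))^[j] (fun x : ℝ => (2*x - j)^m) 0 := by
  rw [fwdDiff_iter_eq_sum_shift]
  apply sum_congr rfl
  intro k hk
  rw [zsmul_eq_mul]
  push_cast
  ring_nf

lemma pow_expand (j m : ℕ) : (fun x : ℝ => (2*x - (j:ℝ))^m)
    = fun x => ∑ i ∈ range (m+1), (2^i * (-(j:ℝ))^(m-i) * (m.choose i)) * x^i := by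
  funext x
  rw [sub_eq_add_neg, add_pow]
  apply sum_congr rfl
  intro i _
  rw [mul_pow]
  ring

lemma S_lt (j m : ℕ) (h : m < j) :
    ∑ k ∈ range (j+1), (-1:ℝ)^(j-k) * (j.choose k) * ((2*k : ℝ) - j)^m = 0 := by
  rw [S_eq, pow_expand, fwdDiff_iter_sum_pow]
  apply Finset.sum_eq_zero
  intro i hi
  have hij : i < j := by have := mem_range.mp hi; omega
  rw [fwdDiff_pow_lt i j hij]
  simp

lemma S_self (j : ℕ) :
    ∑ k ∈ range (j+1), (-1:ℝ)^(j-k) * (j.choose k) * ((2*k : ℝ) - j)^j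
      = 2^j * (j.factorial : ℝ) := by
  rw [S_eq, pow_expand, fwdDiff_iter_sum_pow, sum_range_succ]
  have h0 : ∀ i ∈ range j,
      (2^i * (-(j:ℝ))^(j-i) * ((j).choose i)) * ((fwdDiff (1:ℝ))^[j] (fun x : ℝ => x ^ i)) 0 = 0 := by
    intro i hi
    rw [fwdDiff_pow_lt i j (mem_range.mp hi)]
    simp
  rw [Finset.sum_eq_zero h0, fwdDiff_pow_self]
  simp

lemma S_parity (j : ℕ) :
    ∑ k ∈ range (j+1), (-1:ℝ)^(j-k) * (j.choose k) * ((2*k : ℝ) - j)^(j+1) = 0 := by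
  set F : ℕ → ℝ := fun k => (-1:ℝ)^(j-k) * (j.choose k) * ((2*k : ℝ) - j)^(j+1) with hF
  have hrefl := Finset.sum_range_reflect F (j+1)
  have hneg : ∀ k ∈ range (j+1), F (j + 1 - 1 - k) = - F k := by
    intro k hk
    have hk' : k ≤ j := Nat.lt_succ_iff.mp (mem_range.mp hk)
    obtain ⟨d, rfl⟩ := Nat.exists_eq_add_of_le hk'
    have h2 : k + d + 1 - 1 - k = d := by omega
    have h4 : k + d - k = d := by omega
    have h6 : k + d - d = k := by omega
    have h5 : (k + d).choose d = (k + d).choose k := by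
      rw [← Nat.choose_symm (Nat.le_add_right k d), Nat.add_sub_cancel_left]
    simp only [hF, h2, h4, h5, h6]
    have harg : ((2*(d:ℝ)) - ((k:ℕ) + d : ℕ)) = -((2*(k:ℝ)) - ((k:ℕ) + d : ℕ)) := by
      push_cast; ring
    rw [harg, neg_pow (2*(k:ℝ) - ((k + d : ℕ) : ℝ))]
    have h1 : (-1:ℝ)^k * (-1)^(k+d+1) = -(-1)^d := by
      rw [pow_succ, pow_add, ← mul_assoc, ← mul_assoc, ← mul_pow]
      norm_num
    calc (-1:ℝ)^k * ((k+d).choose k) * ((-1)^(k+d+1) * ((2*(k:ℝ)) - ((k:ℕ) + d : ℕ))^(k+d+1))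
        = ((-1:ℝ)^k * (-1)^(k+d+1)) * (((k+d).choose k) * ((2*(k:ℝ)) - ((k:ℕ) + d : ℕ))^(k+d+1)) := by ring
      _ = _ := by rw [h1]; ring
  rw [Finset.sum_congr rfl hneg, Finset.sum_neg_distrib] at hrefl
  linarith

lemma fwdDiff_iter_sum_real (f : ℝ → ℝ) (s y : ℝ) (j : ℕ) :
    (fwdDiff s)^[j] f y = ∑ k ∈ range (j+1), (-1:ℝ)^(j-k) * (j.choose k) * f (y + k*s) := by
  rw [fwdDiff_iter_eq_sum_shift]
  apply sum_congr rfl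
  intro k hk
  rw [zsmul_eq_mul, nsmul_eq_mul]
  push_cast
  ring_nf

lemma cdiff_iter_eq (f : ℝ → ℝ) (s : ℝ) (hs : s ≠ 0) (j : ℕ) :
    ∀ x : ℝ, (cdiff s)^[j] f x = (fwdDiff (2*s))^[j] f (x - j*s) / (2*s)^j := by
  induction j with
  | zero => intro x; simp
  | succ j ih =>
    intro x
    rw [Function.iterate_succ_apply', Function.iterate_succ_apply' (fwdDiff (2*s))]
    show ((cdiff s)^[j] f (x + s) - (cdiff s)^[j] f (x - s)) / (2*s) = _
    rw [ih (x+s), ih (x-s), fwdDiff]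
    have e1 : x - ((j:ℕ)+1 : ℕ) * s + 2*s = x + s - j*s := by push_cast; ring
    have e2 : x - ((j:ℕ)+1 : ℕ) * s = x - s - j*s := by push_cast; ring
    rw [e1, e2, div_sub_div_same, div_div, ← pow_succ]

lemma fwdDiff_zero_iter (f : ℝ → ℝ) (j : ℕ) (hj : j ≠ 0) (y : ℝ) :
    (fwdDiff (0:ℝ))^[j] f y = 0 := by
  obtain ⟨j', rfl⟩ := Nat.exists_eq_succ_of_ne_zero hj
  rw [Function.iterate_succ_apply', fwdDiff]
  simp

lemma g_eq (f : ℝ → ℝ) (h : ℝ) (hh : h ≠ 0) (j : ℕ) :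
    (fun t : ℝ => t^j * (cdiff (t*h))^[j] f 0)
      = fun t => ∑ k ∈ range (j+1),
          ((-1:ℝ)^(j-k) * (j.choose k) / (2*h)^j) * f (((2*k - (j:ℝ))*h) * t) := by
  funext t
  have hsum : ∀ s : ℝ, ∑ k ∈ range (j+1),
      ((-1:ℝ)^(j-k) * (j.choose k) / (2*h)^j) * f (((2*k - (j:ℝ))*h) * s)
      = (∑ k ∈ range (j+1), (-1:ℝ)^(j-k) * (j.choose k) * f ((0:ℝ) - j*(s*h) + k*(2*(s*h))))
        / (2*h)^j := by
    intro s
    rw [Finset.sum_div]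
    apply sum_congr rfl
    intro k _
    have : ((2*(k:ℝ) - (j:ℝ))*h) * s = (0:ℝ) - j*(s*h) + k*(2*(s*h)) := by ring
    rw [this]
    ring
  by_cases ht : t = 0
  · subst ht
    rw [hsum 0]
    rcases Nat.eq_zero_or_pos j with hj | hj
    · subst hj; simp
    · have h0 := fwdDiff_iter_sum_real f (2*((0:ℝ)*h)) ((0:ℝ) - j*((0:ℝ)*h)) j
      simp only [zero_mul, mul_zero, sub_zero] at h0 ⊢
      rw [← h0, fwdDiff_zero_iter f j hj.ne']
      simp [hj.ne']
  · rw [hsum t, cdiff_iter_eq f (t*h) (mul_ne_zero ht hh) j 0,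
      fwdDiff_iter_sum_real f (2*(t*h)) ((0:ℝ) - j*(t*h)) j]
    have h2th : (2*(t*h))^j ≠ 0 := pow_ne_zero _ (by simp [ht, hh])
    have h2h : ((2:ℝ)*h)^j ≠ 0 := pow_ne_zero _ (by simp [hh])
    field_simp
    ring

lemma iteratedDeriv_fun_add' (f g : ℝ → ℝ) (hf : ContDiff ℝ (⊤ : ℕ∞) f) (hg : ContDiff ℝ (⊤ : ℕ∞) g)
    (m : ℕ) (x : ℝ) :
    iteratedDeriv m (fun t => f t + g t) x = iteratedDeriv m f x + iteratedDeriv m g x := by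
  simp only [← iteratedDerivWithin_univ]
  exact iteratedDerivWithin_add (Set.mem_univ x) uniqueDiffOn_univ
    (hf.contDiffWithinAt.of_le (by exact_mod_cast le_top)) (hg.contDiffWithinAt.of_le (by exact_mod_cast le_top))

lemma iteratedDeriv_fun_const_mul (c : ℝ) (f : ℝ → ℝ) (hf : ContDiff ℝ (⊤ : ℕ∞) f) (m : ℕ) (x : ℝ) :
    iteratedDeriv m (fun t => c * f t) x = c * iteratedDeriv m f x := by
  simp only [← iteratedDerivWithin_univ]
  exact iteratedDerivWithin_const_mul (Set.mem_univ x) uniqueDiffOn_univ c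
    (hf.contDiffWithinAt.of_le (by exact_mod_cast le_top))

lemma iteratedDeriv_fun_sum' {ι : Type*} (s : Finset ι) (F : ι → ℝ → ℝ)
    (hF : ∀ i ∈ s, ContDiff ℝ (⊤ : ℕ∞) (F i)) (m : ℕ) (x : ℝ) :
    iteratedDeriv m (fun t => ∑ i ∈ s, F i t) x = ∑ i ∈ s, iteratedDeriv m (F i) x := by
  classical
  have hzero : ∀ y : ℝ, iteratedDeriv m (fun _ : ℝ => (0:ℝ)) y = 0 := by
    intro y
    induction m with
    | zero => simp
    | succ n ihm =>
      rw [iteratedDeriv_succ']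
      have : deriv (fun _ : ℝ => (0:ℝ)) = fun _ : ℝ => (0:ℝ) := by
        funext z; exact deriv_const z 0
      rw [this]
      exact ihm
  induction s using Finset.induction_on with
  | empty => simpa using hzero x
  | insert a s' ha ih =>
    rw [Finset.sum_insert ha,
      show (fun t => ∑ i ∈ insert a s', F i t) = (fun t => F a t + ∑ i ∈ s', F i t) from by
        funext t; rw [Finset.sum_insert ha],
      iteratedDeriv_fun_add' _ _ (hF a (mem_insert_self a s'))
        (ContDiff.sum fun i hi => hF i (mem_insert_of_mem hi)) m x,
      ih fun i hi => hF i (mem_insert_of_mem hi)]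

lemma iteratedDeriv_gsum (f : ℝ → ℝ) (hf : ContDiff ℝ (⊤ : ℕ∞) f) (h : ℝ) (j m : ℕ) :
    iteratedDeriv m (fun t : ℝ => ∑ k ∈ range (j+1),
        ((-1:ℝ)^(j-k) * (j.choose k) / (2*h)^j) * f (((2*k - (j:ℝ))*h) * t)) 0
      = (∑ k ∈ range (j+1), (-1:ℝ)^(j-k) * (j.choose k) * ((2*k - (j:ℝ)))^m)
          * h^m * iteratedDeriv m f 0 / (2*h)^j := by
  have hcomp : ∀ a : ℝ, ContDiff ℝ (⊤ : ℕ∞) (fun t : ℝ => f (a * t)) := fun a =>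
    hf.comp (contDiff_const.mul contDiff_id)
  rw [iteratedDeriv_fun_sum' _ _
    (fun k _ => contDiff_const.mul (hcomp _)) m 0]
  rw [Finset.sum_mul, Finset.sum_mul, Finset.sum_div]
  apply sum_congr rfl
  intro k _
  rw [iteratedDeriv_fun_const_mul _ _ (hcomp _) m 0]
  have := iteratedDeriv_comp_const_mul (f := f) (n := m) (hf.of_le (by exact_mod_cast le_top)) ((2*(k:ℝ) - (j:ℝ))*h)
  rw [congrFun this 0]
  rw [mul_zero, mul_pow (2*(k:ℝ) - (j:ℝ)) h m]
  ring

lemma taylor_int (g : ℝ → ℝ) (hg : ContDiff ℝ (⊤ : ℕ∞) g) (n : ℕ) :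
    g 1 = (∑ k ∈ range (n+1), iteratedDeriv k g 0 / k.factorial)
      + ∫ t in (0:ℝ)..1, iteratedDeriv (n+1) g t * ((1-t)^n / n.factorial) := by
  induction n with
  | zero =>
    norm_num [iteratedDeriv_one, iteratedDeriv_zero]
    rw [intervalIntegral.integral_deriv_eq_sub
      (fun x _ => (hg.differentiable (by simp)).differentiableAt)
      ((hg.continuous_deriv (by simp)).intervalIntegrable 0 1)]
    ring
  | succ n ih =>
    have hu : ∀ x ∈ Set.uIcc (0:ℝ) 1, HasDerivAt (iteratedDeriv (n+1) g)
        (iteratedDeriv (n+2) g x) x := by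
      intro x _
      have hd : Differentiable ℝ (iteratedDeriv (n+1) g) :=
        hg.differentiable_iteratedDeriv (n+1) (by exact_mod_cast lt_top_iff_ne_top.mpr (by simp))
      have h5 := (hd x).hasDerivAt
      have h6 : iteratedDeriv (n+2) g x = deriv (iteratedDeriv (n+1) g) x := by
        rw [iteratedDeriv_succ]
      rwa [← h6] at h5
    have hv : ∀ x ∈ Set.uIcc (0:ℝ) 1, HasDerivAt (fun t : ℝ => -((1-t)^(n+1) / ((n+1).factorial : ℝ)))
        ((1-x)^n / (n.factorial : ℝ)) x := by
      intro x _
      have h1 : HasDerivAt (fun t : ℝ => 1 - t) (-1) x := (hasDerivAt_id x).const_sub 1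
      have h2 := h1.pow (n+1)
      have h3 := (h2.div_const ((n+1).factorial : ℝ)).neg
      refine h3.congr_deriv ?_
      have hfac : ((n+1).factorial : ℝ) = (n+1) * n.factorial := by
        rw [Nat.factorial_succ]; push_cast; ring
      rw [hfac]
      have hnf : (n.factorial : ℝ) ≠ 0 := Nat.cast_ne_zero.mpr n.factorial_ne_zero
      field_simp
      rw [Nat.add_sub_cancel]; push_cast; ring
    have hu' : IntervalIntegrable (iteratedDeriv (n+2) g) MeasureTheory.volume 0 1 :=
      (hg.continuous_iteratedDeriv (n+2) (WithTop.coe_le_coe.mpr (le_top : ((n+2 : ℕ) : ℕ∞) ≤ ⊤))).intervalIntegrable 0 1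
    have hv' : IntervalIntegrable (fun t : ℝ => (1-t)^n / (n.factorial : ℝ))
        MeasureTheory.volume 0 1 :=
      (((continuous_const.sub continuous_id).pow n).div_const _).intervalIntegrable 0 1
    have hpart := intervalIntegral.integral_mul_deriv_eq_deriv_mul hu hv hu' hv'
    simp only [mul_neg, sub_self, zero_pow (Nat.succ_ne_zero n), zero_div, neg_zero, mul_zero,
      intervalIntegral.integral_neg, sub_zero] at hpart
    rw [ih, sum_range_succ]
    rw [hpart, show n+1+1 = n+2 from rfl, sum_range_succ _ (n+1), sum_range_succ _ n]
    ring

theorem cdiff_iter_error (f : ℝ → ℝ) (hf : ContDiff ℝ (⊤ : ℕ∞) f)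
    (h : ℝ) (hh : h ≠ 0) (j : ℕ) :
    (cdiff h)^[j] f 0 =
      iteratedDeriv j f 0 +
        ∫ t in (0 : ℝ)..1,
          iteratedDeriv (j + 2) (fun s => s ^ j * (cdiff (s * h))^[j] f 0) t *
            (1 - t) ^ (j + 1) / Nat.factorial (j + 1) := by
  have hge := g_eq f h hh j
  set G : ℝ → ℝ := fun t => ∑ k ∈ range (j+1),
      ((-1:ℝ)^(j-k) * (j.choose k) / (2*h)^j) * f (((2*k - (j:ℝ))*h) * t) with hG
  have hGsmooth : ContDiff ℝ (⊤ : ℕ∞) G :=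
    ContDiff.sum fun k _ => contDiff_const.mul (hf.comp (contDiff_const.mul contDiff_id))
  have hG1 : G 1 = (cdiff h)^[j] f 0 := by
    rw [← hge]; simp
  have hsum : ∑ k ∈ range (j+2), iteratedDeriv k G 0 / (k.factorial:ℝ)
      = iteratedDeriv j f 0 := by
    rw [sum_range_succ]
    have hlast : iteratedDeriv (j+1) G 0 = 0 := by
      rw [hG, iteratedDeriv_gsum f hf h j (j+1), S_parity]
      simp
    rw [hlast, zero_div, add_zero,
      Finset.sum_eq_single_of_mem j (self_mem_range_succ j)
        (fun k hk hne => by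
          rw [hG, iteratedDeriv_gsum f hf h j k,
            S_lt j k (by have := mem_range.mp hk; omega)]
          simp)]
    rw [hG, iteratedDeriv_gsum f hf h j j, S_self]
    have h2h : ((2:ℝ)*h)^j ≠ 0 := pow_ne_zero _ (by simp [hh])
    have hjf : ((j.factorial : ℝ)) ≠ 0 := Nat.cast_ne_zero.mpr j.factorial_ne_zero
    field_simp [mul_pow]
    ring
  have ht := taylor_int G hGsmooth (j+1)
  rw [show j+1+1 = j+2 from rfl] at ht
  rw [hge]
  simp only [mul_div_assoc]
  rw [← hG1, ht, hsum]
end
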